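/- arXiv:math/0605017 — 4 statements merged into one kernel-verified Lean document; each statement's English description precedes it below -/
import Mathlib

section
/- Let h : [0,L] → ℝⁿ be weakly differentiable (C¹ suffices) with h(0) = h(L), and let h̄ = (1/L)∫₀ᴸ h(s) ds be its mean. Then sup_{u ∈ [0,L]} |h(u) − h̄| ≤ (1/2) ∫₀ᴸ |h'(s)| ds. -/
/-!
For `a ≤ s ≤ t ≤ b`, the fundamental theorem of calculus bounds `‖h t - h s‖` both by the
variation of `h` over `[s, t]` and, going the other way round the circle `h a = h b`, by its
variation over `[a, s] ∪ [t, b]`. These two bounds add up to the total variation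
`∫ₐᵇ ‖h'‖`, so the smaller one is at most half of it. The mean of `h` is an average of the
values `h s`, hence its distance to `h u` is at most `max_s ‖h u - h s‖`.
-/

open Real intervalIntegral

variable {E : Type*} [NormedAddCommGroup E] [NormedSpace ℝ E] [CompleteSpace E]

theorem norm_sub_le_integral_norm_deriv {f : ℝ → E} (hf : ContDiff ℝ 1 f) {a b : ℝ}
    (hab : a ≤ b) : ‖f b - f a‖ ≤ ∫ t in a..b, ‖deriv f t‖ := by
  rw [← integral_deriv_eq_sub (fun x _ => (hf.differentiable one_ne_zero).differentiableAt)
    ((hf.continuous_deriv le_rfl).intervalIntegrable a b)]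
  exact norm_integral_le_integral_norm hab

theorem norm_sub_le_half_integral_norm_deriv_of_eq {f : ℝ → E} (hf : ContDiff ℝ 1 f)
    {a b s t : ℝ} (hper : f a = f b) (has : a ≤ s) (hst : s ≤ t) (htb : t ≤ b) :
    ‖f t - f s‖ ≤ (1 / 2) * ∫ r in a..b, ‖deriv f r‖ := by
  have hint : ∀ x y, IntervalIntegrable (fun r => ‖deriv f r‖) MeasureTheory.volume x y :=
    fun x y => (hf.continuous_deriv le_rfl).norm.intervalIntegrable x y
  have hsplit : (∫ r in a..s, ‖deriv f r‖) + (∫ r in s..t, ‖deriv f r‖)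
      + (∫ r in t..b, ‖deriv f r‖) = ∫ r in a..b, ‖deriv f r‖ := by
    rw [integral_add_adjacent_intervals (hint a s) (hint s t),
      integral_add_adjacent_intervals (hint a t) (hint t b)]
  have hdirect := norm_sub_le_integral_norm_deriv hf hst
  have haround : ‖f t - f s‖ ≤ (∫ r in a..s, ‖deriv f r‖) + ∫ r in t..b, ‖deriv f r‖ :=
    calc ‖f t - f s‖ = ‖(f s - f a) + (f b - f t)‖ := by
          rw [← norm_neg, hper]; congr 1; abel
      _ ≤ ‖f s - f a‖ + ‖f b - f t‖ := norm_add_le _ _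
      _ ≤ _ := add_le_add (norm_sub_le_integral_norm_deriv hf has)
          (norm_sub_le_integral_norm_deriv hf htb)
  linarith

theorem norm_sub_average_le_of_forall_norm_sub_le {f : ℝ → E} (hf : Continuous f) {a b C : ℝ}
    (hab : a < b) (x : E) (hC : ∀ s ∈ Set.Icc a b, ‖x - f s‖ ≤ C) :
    ‖x - (b - a)⁻¹ • ∫ s in a..b, f s‖ ≤ C := by
  have hba : 0 < b - a := sub_pos.mpr hab
  have hmean : x - (b - a)⁻¹ • ∫ s in a..b, f s = (b - a)⁻¹ • ∫ s in a..b, (x - f s) := by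
    rw [integral_sub intervalIntegrable_const (hf.intervalIntegrable a b), integral_const,
      smul_sub, smul_smul, inv_mul_cancel₀ hba.ne', one_smul]
  have hbound : ‖∫ s in a..b, (x - f s)‖ ≤ C * |b - a| :=
    norm_integral_le_of_norm_le_const fun s hs =>
      hC s (Set.uIoc_subset_uIcc.trans (Set.uIcc_of_le hab.le).subset hs)
  rw [hmean, norm_smul, norm_inv, norm_eq_abs, abs_of_pos hba]
  rw [abs_of_pos hba] at hbound
  calc (b - a)⁻¹ * ‖∫ s in a..b, (x - f s)‖ ≤ (b - a)⁻¹ * (C * (b - a)) := by gcongr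
    _ = C := by field_simp

/-- Poincaré-type inequality: for a C¹ periodic map `h : [0,L] → ℝⁿ` with mean `h̄`,
`sup_{u∈[0,L]} ‖h u - h̄‖ ≤ (1/2) ∫₀ᴸ ‖h'‖`. -/
theorem sup_dist_mean_le_half_integral_deriv
    (n : ℕ) (L : ℝ) (hL : 0 < L)
    (h : ℝ → EuclideanSpace ℝ (Fin n)) (hh : ContDiff ℝ 1 h)
    (hper : h 0 = h L) :
    ∀ u ∈ Set.Icc (0 : ℝ) L,
      ‖h u - L⁻¹ • ∫ s in (0:ℝ)..L, h s‖ ≤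
        (1 / 2) * ∫ s in (0:ℝ)..L, ‖deriv h s‖ := by
  intro u hu
  have hdist : ∀ s ∈ Set.Icc (0 : ℝ) L,
      ‖h u - h s‖ ≤ (1 / 2) * ∫ r in (0:ℝ)..L, ‖deriv h r‖ := by
    intro s hs
    rcases le_total s u with hsu | hus
    · exact norm_sub_le_half_integral_norm_deriv_of_eq hh hper hs.1 hsu hu.2
    · rw [norm_sub_rev]
      exact norm_sub_le_half_integral_norm_deriv_of_eq hh hper hu.1 hus hs.2
  simpa using norm_sub_average_le_of_forall_norm_sub_le hh.continuous hL (h u) hdist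
end

section
/- Let C : S¹ × [0,1] → ℝⁿ be a smooth homotopy of immersed curves, L(v) the length of C(·,v), and for λ > 0 define ‖∂_v C(·,v)‖²_{H¹} := (1/L(v))∫ |∂_v C|² ds + λ L(v) ∫ |D_s ∂_v C|² ds, where ds = |∂_u C| du and D_s = (1/|∂_u C|)∂_u. Then |L(1) − L(0)| ≤ (1/√λ) ∫₀¹ ‖∂_v C(·,v)‖_{H¹} dv. -/
/-!
Since the norm is 1-Lipschitz, `|‖∂ᵤC(u,1)‖ - ‖∂ᵤC(u,0)‖| ≤ ∫₀¹ ‖∂ᵤᵥC(u,v)‖ dv` for every `u`;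
integrating in `u` and swapping the integrals gives `|L(1) - L(0)| ≤ ∫₀¹ ∫ ‖∂ᵤᵥC‖ du dv`.
For fixed `v`, `‖∂ᵤᵥC‖ du = |D_s ∂ᵥC| ds`, so Cauchy–Schwarz for the arclength measure bounds
`(∫ ‖∂ᵤᵥC‖ du)²` by `L ∫ |D_s ∂ᵥC|² ds ≤ ‖∂ᵥC‖²_{H¹} / λ`.
-/

open Real

/-- The `u`-derivative of a homotopy. -/
noncomputable def Cu (n : ℕ) (C : ℝ → ℝ → EuclideanSpace ℝ (Fin n)) (u v : ℝ) :
    EuclideanSpace ℝ (Fin n) :=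
  deriv (fun u' => C u' v) u

/-- The mixed `u,v`-derivative of a homotopy. -/
noncomputable def Cuv (n : ℕ) (C : ℝ → ℝ → EuclideanSpace ℝ (Fin n)) (u v : ℝ) :
    EuclideanSpace ℝ (Fin n) :=
  deriv (fun v' => Cu n C u v') v

/-- Length of the curve `C(·,v)` (curves are 2π-periodic maps `ℝ → ℝⁿ`). -/
noncomputable def clen (n : ℕ) (C : ℝ → ℝ → EuclideanSpace ℝ (Fin n)) (v : ℝ) : ℝ :=
  ∫ u in (0:ℝ)..(2 * π), ‖Cu n C u v‖

/-- The `H¹` norm of the deformation `∂ᵥC(·,v)`: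
`‖∂ᵥC‖²_{H¹} = (1/L)∫‖∂ᵥC‖² ds + λ L ∫‖D_s ∂ᵥC‖² ds` with `ds = |∂ᵤC| du`,
`D_s ∂ᵥC = |∂ᵤC|⁻¹ ∂ᵤᵥC`. -/
noncomputable def H1normOfDeformation (n : ℕ) (C : ℝ → ℝ → EuclideanSpace ℝ (Fin n))
    (lam v : ℝ) : ℝ :=
  Real.sqrt ((clen n C v)⁻¹ *
      (∫ u in (0:ℝ)..(2 * π), ‖deriv (fun v' => C u v') v‖ ^ 2 * ‖Cu n C u v‖)
    + lam * clen n C v *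
      ∫ u in (0:ℝ)..(2 * π), ‖(‖Cu n C u v‖⁻¹ : ℝ) • Cuv n C u v‖ ^ 2 * ‖Cu n C u v‖)

open MeasureTheory Function

section Uncurry

variable {E : Type*} [NormedAddCommGroup E] [NormedSpace ℝ E] {f : ℝ → ℝ → E}
  {m n : WithTop ℕ∞}

theorem ContDiff.uncurry_deriv_fst (hf : ContDiff ℝ n (uncurry f)) (hmn : m + 1 ≤ n) :
    ContDiff ℝ m (uncurry fun u v => deriv (fun u' => f u' v) u) := by
  have hdiff := (hf.of_le (le_add_self.trans hmn)).differentiable one_ne_zero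
  have hpartial : (uncurry fun u v => deriv (fun u' => f u' v) u) =
      fun p => fderiv ℝ (uncurry f) p (1, 0) := by
    funext ⟨u, v⟩
    exact ((hdiff (u, v)).hasFDerivAt.comp_hasDerivAt u
      ((hasDerivAt_id u).prodMk (hasDerivAt_const u v))).deriv
  rw [hpartial]
  exact (hf.fderiv_right hmn).clm_apply contDiff_const

theorem ContDiff.uncurry_deriv_snd (hf : ContDiff ℝ n (uncurry f)) (hmn : m + 1 ≤ n) :
    ContDiff ℝ m (uncurry fun u v => deriv (f u) v) := by
  have hdiff := (hf.of_le (le_add_self.trans hmn)).differentiable one_ne_zero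
  have hpartial : (uncurry fun u v => deriv (f u) v) =
      fun p => fderiv ℝ (uncurry f) p (0, 1) := by
    funext ⟨u, v⟩
    exact ((hdiff (u, v)).hasFDerivAt.comp_hasDerivAt v
      ((hasDerivAt_const v u).prodMk (hasDerivAt_id v))).deriv
  rw [hpartial]
  exact (hf.fderiv_right hmn).clm_apply contDiff_const

theorem continuous_intervalIntegral_fst {F : ℝ → ℝ → E} (hF : Continuous (uncurry F))
    (a b : ℝ) : Continuous fun v => ∫ u in a..b, F u v :=
  intervalIntegral.continuous_parametric_intervalIntegral_of_continuous'
    (f := fun v u => F u v) (hF.comp continuous_swap) a b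

end Uncurry

section LengthVariation

variable {E : Type*} [NormedAddCommGroup E] [NormedSpace ℝ E] [CompleteSpace E]

theorem abs_norm_sub_norm_le_integral_norm_deriv {γ : ℝ → E} (hγ : ContDiff ℝ 1 γ) {c d : ℝ}
    (hcd : c ≤ d) : |‖γ d‖ - ‖γ c‖| ≤ ∫ v in c..d, ‖deriv γ v‖ :=
  calc |‖γ d‖ - ‖γ c‖| ≤ ‖γ d - γ c‖ := abs_norm_sub_norm_le _ _
    _ = ‖∫ v in c..d, deriv γ v‖ := by
      rw [intervalIntegral.integral_deriv_of_contDiffOn_Icc hγ.contDiffOn hcd]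
    _ ≤ ∫ v in c..d, ‖deriv γ v‖ := intervalIntegral.norm_integral_le_integral_norm hcd

theorem abs_intervalIntegral_norm_sub_le {g : ℝ → ℝ → E} (hg : ContDiff ℝ 1 (uncurry g))
    {a b c d : ℝ} (hab : a ≤ b) (hcd : c ≤ d) :
    |(∫ u in a..b, ‖g u d‖) - ∫ u in a..b, ‖g u c‖| ≤
      ∫ v in c..d, ∫ u in a..b, ‖deriv (g u) v‖ := by
  have hg_cont : Continuous (uncurry g) := hg.continuous
  have hdg_cont : Continuous (uncurry fun u v => ‖deriv (g u) v‖) :=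
    (hg.uncurry_deriv_snd (m := 0) (by norm_num)).continuous.norm
  have hslice : ∀ v, Continuous fun u => ‖g u v‖ := fun v => (hg_cont.uncurry_right v).norm
  rw [← intervalIntegral.integral_sub ((hslice d).intervalIntegrable a b)
      ((hslice c).intervalIntegrable a b),
    ← intervalIntegral_intervalIntegral_swap
      ((hdg_cont.continuousOn.integrableOn_compact (isCompact_uIcc.prod isCompact_uIcc)).mono_set
        (Set.prod_mono Set.uIoc_subset_uIcc Set.uIoc_subset_uIcc))]
  refine (intervalIntegral.abs_integral_le_integral_abs hab).trans
    (intervalIntegral.integral_mono_on hab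
      (((hslice d).sub (hslice c)).abs.intervalIntegrable a b)
      ((intervalIntegral.continuous_parametric_intervalIntegral_of_continuous' hdg_cont c d
        ).intervalIntegrable a b) fun u _ => ?_)
  exact abs_norm_sub_norm_le_integral_norm_deriv (γ := g u)
    (hg.comp (contDiff_const.prodMk contDiff_id)) hcd

end LengthVariation

theorem sq_integral_mul_le_integral_mul_integral_mul_sq {α : Type*} [MeasurableSpace α]
    {μ : Measure α} {w k : α → ℝ} (hw : 0 ≤ᵐ[μ] w) (hw_int : Integrable w μ)
    (hwk : Integrable (fun x => w x * k x) μ) (hwk2 : Integrable (fun x => w x * k x ^ 2) μ) :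
    (∫ x, w x * k x ∂μ) ^ 2 ≤ (∫ x, w x ∂μ) * ∫ x, w x * k x ^ 2 ∂μ := by
  have hquad : ∀ t : ℝ, 0 ≤ (∫ x, w x ∂μ) * (t * t) + (2 * ∫ x, w x * k x ∂μ) * t +
      ∫ x, w x * k x ^ 2 ∂μ := by
    intro t
    have hexpand : ∫ x, w x * (k x + t) ^ 2 ∂μ =
        (∫ x, w x ∂μ) * (t * t) + (2 * ∫ x, w x * k x ∂μ) * t + ∫ x, w x * k x ^ 2 ∂μ := by
      have hpoint : ∀ x, w x * (k x + t) ^ 2 =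
          (t * t) * w x + (2 * t) * (w x * k x) + w x * k x ^ 2 := fun x => by ring
      simp_rw [hpoint]
      rw [integral_add, integral_add, integral_const_mul, integral_const_mul]
      · ring
      all_goals fun_prop
    rw [← hexpand]
    refine integral_nonneg_of_ae ?_
    filter_upwards [hw] with x hx
    exact mul_nonneg hx (sq_nonneg _)
  have hdisc := discrim_le_zero hquad
  rw [discrim] at hdisc
  linarith

section Homotopy

variable {n : ℕ} {C : ℝ → ℝ → EuclideanSpace ℝ (Fin n)}

theorem contDiff_uncurry_Cu (hC : ContDiff ℝ 2 (uncurry C)) : ContDiff ℝ 1 (uncurry (Cu n C)) :=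
  hC.uncurry_deriv_fst (by norm_num)

theorem continuous_uncurry_Cuv (hC : ContDiff ℝ 2 (uncurry C)) :
    Continuous (uncurry (Cuv n C)) :=
  ((contDiff_uncurry_Cu hC).uncurry_deriv_snd (m := 0) (by norm_num)).continuous

theorem clen_pos (hC : ContDiff ℝ 2 (uncurry C)) (himm : ∀ u v, Cu n C u v ≠ 0) (v : ℝ) :
    0 < clen n C v :=
  intervalIntegral.intervalIntegral_pos_of_pos_on
    (((contDiff_uncurry_Cu hC).continuous.uncurry_right v).norm.intervalIntegrable _ _)
    (fun u _ => norm_pos_iff.2 (himm u v)) two_pi_pos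

theorem continuous_H1normOfDeformation (hC : ContDiff ℝ 2 (uncurry C))
    (himm : ∀ u v, Cu n C u v ≠ 0) (lam : ℝ) : Continuous (H1normOfDeformation n C lam) := by
  have hCu : Continuous fun p : ℝ × ℝ => Cu n C p.1 p.2 := (contDiff_uncurry_Cu hC).continuous
  have hCv : Continuous fun p : ℝ × ℝ => deriv (fun v' => C p.1 v') p.2 :=
    (hC.uncurry_deriv_snd (m := 0) (by norm_num)).continuous
  have hCuv : Continuous fun p : ℝ × ℝ => Cuv n C p.1 p.2 := continuous_uncurry_Cuv hC
  have hslice (F : ℝ → ℝ → ℝ) (hF : Continuous (uncurry F)) :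
      Continuous fun v => ∫ u in (0:ℝ)..(2 * π), F u v :=
    continuous_intervalIntegral_fst hF _ _
  have hlen : Continuous (clen n C) := hslice _ hCu.norm
  have hP := hslice (fun u v => ‖deriv (fun v' => C u v') v‖ ^ 2 * ‖Cu n C u v‖) (by fun_prop)
  have hQ := hslice (fun u v => ‖(‖Cu n C u v‖⁻¹ : ℝ) • Cuv n C u v‖ ^ 2 * ‖Cu n C u v‖)
    (by fun_prop (disch := exact fun p => norm_ne_zero_iff.2 (himm p.1 p.2)))
  exact continuous_sqrt.comp (((hlen.inv₀ fun v => (clen_pos hC himm v).ne').mul hP).add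
    ((continuous_const.mul hlen).mul hQ))

theorem sqrt_mul_integral_norm_Cuv_le_H1normOfDeformation (hC : ContDiff ℝ 2 (uncurry C))
    (himm : ∀ u v, Cu n C u v ≠ 0) {lam : ℝ} (hlam : 0 ≤ lam) (v : ℝ) :
    √lam * ∫ u in (0:ℝ)..(2 * π), ‖Cuv n C u v‖ ≤ H1normOfDeformation n C lam v := by
  have hCu : Continuous fun u => ‖Cu n C u v‖ :=
    ((contDiff_uncurry_Cu hC).continuous.uncurry_right v).norm
  have hCuv : Continuous fun u => ‖Cuv n C u v‖ :=
    ((continuous_uncurry_Cuv hC).uncurry_right v).norm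
  have hCu_ne : ∀ u, ‖Cu n C u v‖ ≠ 0 := fun u => norm_ne_zero_iff.2 (himm u v)
  rw [H1normOfDeformation]
  set I := ∫ u in (0:ℝ)..(2 * π), ‖Cuv n C u v‖
  set L := clen n C v with hL
  set P := ∫ u in (0:ℝ)..(2 * π), ‖deriv (fun v' => C u v') v‖ ^ 2 * ‖Cu n C u v‖
  set Q := ∫ u in (0:ℝ)..(2 * π), ‖(‖Cu n C u v‖⁻¹ : ℝ) • Cuv n C u v‖ ^ 2 * ‖Cu n C u v‖
  have hCS : I ^ 2 ≤ L * Q := by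
    have hI_eq :
        I = ∫ u in Set.Ioc 0 (2 * π), ‖Cu n C u v‖ * (‖Cu n C u v‖⁻¹ * ‖Cuv n C u v‖) := by
      simp only [I, mul_inv_cancel_left₀ (hCu_ne _), intervalIntegral.integral_of_le two_pi_pos.le]
    have hQ_eq :
        Q = ∫ u in Set.Ioc 0 (2 * π), ‖Cu n C u v‖ * (‖Cu n C u v‖⁻¹ * ‖Cuv n C u v‖) ^ 2 := by
      simp only [Q, norm_smul, norm_inv, norm_norm, intervalIntegral.integral_of_le two_pi_pos.le]
      congr 1 with u
      ring
    have hk : Continuous fun u => ‖Cu n C u v‖⁻¹ * ‖Cuv n C u v‖ := (hCu.inv₀ hCu_ne).mul hCuv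
    rw [hI_eq, hQ_eq, hL, clen, intervalIntegral.integral_of_le two_pi_pos.le]
    exact sq_integral_mul_le_integral_mul_integral_mul_sq (ae_of_all _ fun u => norm_nonneg _)
      (hCu.intervalIntegrable _ _).1 ((hCu.mul hk).intervalIntegrable _ _).1
      ((hCu.mul (hk.pow 2)).intervalIntegrable _ _).1
  have hI : 0 ≤ I := intervalIntegral.integral_nonneg two_pi_pos.le fun u _ => norm_nonneg _
  have hP : 0 ≤ L⁻¹ * P := mul_nonneg (inv_nonneg.2 (clen_pos hC himm v).le)
    (intervalIntegral.integral_nonneg two_pi_pos.le fun u _ => by positivity)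
  calc √lam * I = √(lam * I ^ 2) := by rw [sqrt_mul hlam, sqrt_sq hI]
    _ ≤ √(L⁻¹ * P + lam * L * Q) :=
      sqrt_le_sqrt (by nlinarith [mul_le_mul_of_nonneg_left hCS hlam])

end Homotopy

theorem length_diff_le_H1_path_length_general
    (n : ℕ) (lam : ℝ) (hlam : 0 < lam)
    (C : ℝ → ℝ → EuclideanSpace ℝ (Fin n))
    (hC : ContDiff ℝ (⊤ : ℕ∞) fun p : ℝ × ℝ => C p.1 p.2)
    (himm : ∀ u v, Cu n C u v ≠ 0) :
    |clen n C 1 - clen n C 0| ≤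
      (Real.sqrt lam)⁻¹ * ∫ v in (0:ℝ)..1, H1normOfDeformation n C lam v := by
  have hC2 : ContDiff ℝ 2 (uncurry C) := hC.of_le (WithTop.coe_le_coe.2 le_top)
  have hsqrt : 0 < √lam := sqrt_pos.2 hlam
  calc |clen n C 1 - clen n C 0|
      ≤ ∫ v in (0:ℝ)..1, ∫ u in (0:ℝ)..(2 * π), ‖Cuv n C u v‖ :=
        abs_intervalIntegral_norm_sub_le (contDiff_uncurry_Cu hC2) two_pi_pos.le zero_le_one
    _ ≤ ∫ v in (0:ℝ)..1, (√lam)⁻¹ * H1normOfDeformation n C lam v :=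
        intervalIntegral.integral_mono_on zero_le_one
          ((continuous_intervalIntegral_fst (F := fun u v => ‖Cuv n C u v‖)
            (continuous_uncurry_Cuv hC2).norm _ _
            ).intervalIntegrable _ _)
          ((continuous_const.mul (continuous_H1normOfDeformation hC2 himm lam)
            ).intervalIntegrable _ _)
          fun v _ => (le_inv_mul_iff₀ hsqrt).2
            (sqrt_mul_integral_norm_Cuv_le_H1normOfDeformation hC2 himm hlam.le v)
    _ = (√lam)⁻¹ * ∫ v in (0:ℝ)..1, H1normOfDeformation n C lam v :=
        intervalIntegral.integral_const_mul _ _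

/-- The length functional is Lipschitz along an `H¹` path of curves:
`|L(1) - L(0)| ≤ (1/√λ) ∫₀¹ ‖∂ᵥC(·,v)‖_{H¹} dv`. -/
theorem length_diff_le_H1_path_length
    (n : ℕ) (lam : ℝ) (hlam : 0 < lam)
    (C : ℝ → ℝ → EuclideanSpace ℝ (Fin n))
    (hC : ContDiff ℝ (⊤ : ℕ∞) fun p : ℝ × ℝ => C p.1 p.2)
    (hper : ∀ u v, C (u + 2 * π) v = C u v)
    (himm : ∀ u v, Cu n C u v ≠ 0) :
    |clen n C 1 - clen n C 0| ≤
      (Real.sqrt lam)⁻¹ * ∫ v in (0:ℝ)..1, H1normOfDeformation n C lam v :=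
  length_diff_le_H1_path_length_general n lam hlam C hC himm
end

section
/- Let g : ℝⁿ → ℝ be C¹, c : S¹ → ℝⁿ a smooth immersed closed curve of length L, and ⟨g(c)⟩ := (1/L)∫ g(c(s)) ds. Then the first variation in direction h is d/dε|_{ε=0} ⟨g(c+εh)⟩ = (1/L) ∫ [∇g(c)·h + (g(c) − ⟨g(c)⟩)⟨D_s h, T⟩] ds. -/
open Real MeasureTheory Set Metric
open scoped RealInnerProductSpace Topology

/-! The average is the quotient of `∫ g(c_ε) ds_ε` by the length `∫ ds_ε` of `c_ε = c + εh`.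
Both are differentiated under the integral sign: the speed `‖c' + εh'‖` stays away from zero
for `ε` near `0` uniformly on the compact parameter interval, so the `ε`-derivatives of the
integrands are continuous on a compact rectangle and hence uniformly bounded. Pointwise the
variation of `ds` is `⟨D_s h, T⟩ ds`, and the quotient rule gives the formula. -/

theorem HasDerivAt.norm {E : Type*} [NormedAddCommGroup E] [InnerProductSpace ℝ E]
    {u : ℝ → E} {w : E} {x : ℝ} (hu : HasDerivAt u w x) (h0 : u x ≠ 0) :
    HasDerivAt (fun y => ‖u y‖) (⟪u x, w⟫ / ‖u x‖) x := by
  have h0' : ‖u x‖ ≠ 0 := norm_ne_zero_iff.mpr h0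
  have h := hu.norm_sq.sqrt (pow_ne_zero 2 h0')
  simp only [Real.sqrt_sq (norm_nonneg _)] at h
  convert h using 1
  field_simp

theorem intervalIntegral.hasDerivAt_integral_of_continuousOn_deriv {E : Type*}
    [NormedAddCommGroup E] [NormedSpace ℝ E] {Φ Φ' : ℝ → ℝ → E} {a b ε₀ r : ℝ} (hr : 0 < r)
    (hΦ : ∀ ε ∈ ball ε₀ r, ContinuousOn (Φ ε) (uIcc a b))
    (hΦ' : ContinuousOn (Function.uncurry Φ') (closedBall ε₀ r ×ˢ uIcc a b))
    (hd : ∀ ε ∈ ball ε₀ r, ∀ θ ∈ uIcc a b, HasDerivAt (Φ · θ) (Φ' ε θ) ε) :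
    HasDerivAt (fun ε : ℝ => ∫ θ in a..b, Φ ε θ) (∫ θ in a..b, Φ' ε₀ θ) ε₀ := by
  obtain ⟨C, hC⟩ :=
    ((isCompact_closedBall ε₀ r).prod isCompact_uIcc).exists_bound_of_continuousOn hΦ'
  have hΦ'₀ : ContinuousOn (Φ' ε₀) (uIcc a b) :=
    hΦ'.comp (f := fun θ => (ε₀, θ)) (by fun_prop) fun θ hθ => ⟨mem_closedBall_self hr.le, hθ⟩
  refine (intervalIntegral.hasDerivAt_integral_of_dominated_loc_of_deriv_le
    (bound := fun _ => C) (ball_mem_nhds ε₀ hr) ?_ (hΦ ε₀ (mem_ball_self hr)).intervalIntegrable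
    ((hΦ'₀.mono uIoc_subset_uIcc).aestronglyMeasurable measurableSet_uIoc) ?_
    intervalIntegrable_const ?_).2
  · filter_upwards [ball_mem_nhds ε₀ hr] with ε hε
    exact ((hΦ ε hε).mono uIoc_subset_uIcc).aestronglyMeasurable measurableSet_uIoc
  · exact ae_of_all _ fun θ hθ ε hε =>
      hC (ε, θ) ⟨ball_subset_closedBall hε, uIoc_subset_uIcc hθ⟩
  · exact ae_of_all _ fun θ hθ ε hε => hd ε hε θ (uIoc_subset_uIcc hθ)

theorem eventually_forall_add_smul_ne_zero {E : Type*} [NormedAddCommGroup E] [NormedSpace ℝ E]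
    {u v : ℝ → E} (hu : Continuous u) (hv : Continuous v) {K : Set ℝ} (hK : IsCompact K)
    (h0 : ∀ θ ∈ K, u θ ≠ 0) : ∀ᶠ ε in 𝓝 (0 : ℝ), ∀ θ ∈ K, u θ + ε • v θ ≠ 0 :=
  hK.eventually_forall_of_forall_eventually fun θ hθ =>
    (show Continuous fun p : ℝ × ℝ => u p.2 + p.1 • v p.2 by fun_prop).continuousAt.eventually_ne
      (by simpa using h0 θ hθ)

theorem hasDerivAt_mul_norm_add_smul {E : Type*} [NormedAddCommGroup E] [InnerProductSpace ℝ E]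
    {G : E → ℝ} {x y p q : E} {ε : ℝ} (hG : DifferentiableAt ℝ G (x + ε • y))
    (hw : p + ε • q ≠ 0) :
    HasDerivAt (fun e : ℝ => G (x + e • y) * ‖p + e • q‖)
      ((fderiv ℝ G (x + ε • y) y + G (x + ε • y) *
        ⟪‖p + ε • q‖⁻¹ • q, ‖p + ε • q‖⁻¹ • (p + ε • q)⟫) * ‖p + ε • q‖) ε := by
  have hline (z w : E) : HasDerivAt (fun e : ℝ => z + e • w) w ε := by
    simpa using ((hasDerivAt_id ε).smul_const w).const_add z
  refine ((hG.hasFDerivAt.comp_hasDerivAt ε (hline x y)).mul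
    ((hline p q).norm hw)).congr_deriv ?_
  have : ‖p + ε • q‖ ≠ 0 := norm_ne_zero_iff.2 hw
  rw [real_inner_smul_left, real_inner_smul_right, real_inner_comm]
  field_simp

theorem hasDerivAt_intervalIntegral_mul_norm_add_smul {E : Type*} [NormedAddCommGroup E]
    [InnerProductSpace ℝ E] {G : E → ℝ} (hG : ContDiff ℝ 1 G) {γ η u v : ℝ → E}
    (hγ : Continuous γ) (hη : Continuous η) (hu : Continuous u) (hv : Continuous v) {a b : ℝ}
    (hu0 : ∀ θ ∈ uIcc a b, u θ ≠ 0) :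
    HasDerivAt (fun ε : ℝ => ∫ θ in a..b, G (γ θ + ε • η θ) * ‖u θ + ε • v θ‖)
      (∫ θ in a..b,
        (fderiv ℝ G (γ θ) (η θ) + G (γ θ) * ⟪‖u θ‖⁻¹ • v θ, ‖u θ‖⁻¹ • u θ⟫) * ‖u θ‖) 0 := by
  obtain ⟨r, hr, hne⟩ := nhds_basis_closedBall.eventually_iff.1
    (eventually_forall_add_smul_ne_zero hu hv isCompact_uIcc hu0)
  have hinv : ContinuousOn (fun p : ℝ × ℝ => ‖u p.2 + p.1 • v p.2‖⁻¹)
      (closedBall 0 r ×ˢ uIcc a b) :=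
    ContinuousOn.inv₀ (by fun_prop) fun p hp => norm_ne_zero_iff.2 (hne hp.1 p.2 hp.2)
  have hG₀ := hG.continuous
  have key := intervalIntegral.hasDerivAt_integral_of_continuousOn_deriv hr
    (Φ := fun ε θ => G (γ θ + ε • η θ) * ‖u θ + ε • v θ‖)
    (Φ' := fun ε θ => (fderiv ℝ G (γ θ + ε • η θ) (η θ) + G (γ θ + ε • η θ) *
      ⟪‖u θ + ε • v θ‖⁻¹ • v θ, ‖u θ + ε • v θ‖⁻¹ • (u θ + ε • v θ)⟫) * ‖u θ + ε • v θ‖)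
    (fun ε _ => by fun_prop) (by unfold Function.uncurry; fun_prop) fun ε hε θ hθ =>
      hasDerivAt_mul_norm_add_smul (hG.differentiable one_ne_zero _)
        (hne (ball_subset_closedBall hε) θ hθ)
  simpa only [zero_smul, add_zero] using key

theorem hasDerivAt_intervalIntegral_norm_add_smul {E : Type*} [NormedAddCommGroup E]
    [InnerProductSpace ℝ E] {u v : ℝ → E} (hu : Continuous u) (hv : Continuous v) {a b : ℝ}
    (hu0 : ∀ θ ∈ uIcc a b, u θ ≠ 0) :
    HasDerivAt (fun ε : ℝ => ∫ θ in a..b, ‖u θ + ε • v θ‖)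
      (∫ θ in a..b, ⟪‖u θ‖⁻¹ • v θ, ‖u θ‖⁻¹ • u θ⟫ * ‖u θ‖) 0 := by
  simpa only [fderiv_const_apply, zero_apply, zero_add, one_mul] using
    hasDerivAt_intervalIntegral_mul_norm_add_smul (G := fun _ => (1 : ℝ)) contDiff_const
      (continuous_const (y := u 0)) (continuous_const (y := v 0)) hu hv hu0

theorem hasDerivAt_average_mul_norm_add_smul {E : Type*} [NormedAddCommGroup E]
    [InnerProductSpace ℝ E] {G : E → ℝ} (hG : ContDiff ℝ 1 G) {γ η u v : ℝ → E}
    (hγ : Continuous γ) (hη : Continuous η) (hu : Continuous u) (hv : Continuous v) {a b : ℝ}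
    (hab : a < b) (hu0 : ∀ θ ∈ uIcc a b, u θ ≠ 0) :
    HasDerivAt
      (fun ε : ℝ => (∫ θ in a..b, ‖u θ + ε • v θ‖)⁻¹ *
        ∫ θ in a..b, G (γ θ + ε • η θ) * ‖u θ + ε • v θ‖)
      ((∫ θ in a..b, ‖u θ‖)⁻¹ *
        ∫ θ in a..b, (fderiv ℝ G (γ θ) (η θ) +
          (G (γ θ) - (∫ θ' in a..b, ‖u θ'‖)⁻¹ * ∫ θ' in a..b, G (γ θ') * ‖u θ'‖) *
            ⟪‖u θ‖⁻¹ • v θ, ‖u θ‖⁻¹ • u θ⟫) * ‖u θ‖) 0 := by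
  have hL : 0 < ∫ θ in a..b, ‖u θ‖ :=
    intervalIntegral.intervalIntegral_pos_of_pos_on (hu.norm.intervalIntegrable _ _)
      (fun θ hθ => norm_pos_iff.2 (hu0 θ (Ioo_subset_Icc_self.trans Icc_subset_uIcc hθ))) hab
  refine (((hasDerivAt_intervalIntegral_norm_add_smul hu hv hu0).inv (by simpa using hL.ne')).mul
    (hasDerivAt_intervalIntegral_mul_norm_add_smul hG hγ hη hu hv hu0)).congr_deriv ?_
  simp only [Pi.inv_apply, zero_smul, add_zero]
  set L := ∫ θ in a..b, ‖u θ‖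
  set A := L⁻¹ * ∫ θ in a..b, G (γ θ) * ‖u θ‖ with hA
  have hinv : ContinuousOn (fun θ => ‖u θ‖⁻¹) (uIcc a b) :=
    hu.norm.continuousOn.inv₀ fun θ hθ => norm_ne_zero_iff.2 (hu0 θ hθ)
  have hG₀ := hG.continuous
  have hsplit : ∫ θ in a..b, (fderiv ℝ G (γ θ) (η θ) + (G (γ θ) - A) *
        ⟪‖u θ‖⁻¹ • v θ, ‖u θ‖⁻¹ • u θ⟫) * ‖u θ‖ =
      (∫ θ in a..b, (fderiv ℝ G (γ θ) (η θ) + G (γ θ) *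
        ⟪‖u θ‖⁻¹ • v θ, ‖u θ‖⁻¹ • u θ⟫) * ‖u θ‖) -
      A * ∫ θ in a..b, ⟪‖u θ‖⁻¹ • v θ, ‖u θ‖⁻¹ • u θ⟫ * ‖u θ‖ := by
    rw [← intervalIntegral.integral_const_mul, ← intervalIntegral.integral_sub
      (ContinuousOn.intervalIntegrable (by fun_prop)) (ContinuousOn.intervalIntegrable (by fun_prop))]
    exact intervalIntegral.integral_congr fun θ _ => by ring
  rw [hsplit, hA]
  field_simp
  ring

theorem first_variation_of_average_general
    (n : ℕ) (g : EuclideanSpace ℝ (Fin n) → ℝ) (hg : ContDiff ℝ 1 g)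
    (c h : ℝ → EuclideanSpace ℝ (Fin n))
    (hc : ContDiff ℝ (⊤ : ℕ∞) c) (hh : ContDiff ℝ (⊤ : ℕ∞) h)
    (himm : ∀ θ, deriv c θ ≠ 0) :
    HasDerivAt
      (fun ε : ℝ =>
        (∫ θ in (0:ℝ)..(2 * π), ‖deriv (fun θ' => c θ' + ε • h θ') θ‖)⁻¹ *
          ∫ θ in (0:ℝ)..(2 * π),
            g (c θ + ε • h θ) * ‖deriv (fun θ' => c θ' + ε • h θ') θ‖)
      ((∫ θ in (0:ℝ)..(2 * π), ‖deriv c θ‖)⁻¹ *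
        ∫ θ in (0:ℝ)..(2 * π),
          (fderiv ℝ g (c θ) (h θ) +
            (g (c θ) -
              (∫ θ' in (0:ℝ)..(2 * π), ‖deriv c θ'‖)⁻¹ *
                ∫ θ' in (0:ℝ)..(2 * π), g (c θ') * ‖deriv c θ'‖) *
              ⟪‖deriv c θ‖⁻¹ • deriv h θ, ‖deriv c θ‖⁻¹ • deriv c θ⟫) *
            ‖deriv c θ‖) 0 := by
  have hspeed (ε : ℝ) : deriv (fun θ => c θ + ε • h θ) = fun θ => deriv c θ + ε • deriv h θ :=
    funext fun θ => ((hc.differentiable (by simp) θ).hasDerivAt.add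
      ((hh.differentiable (by simp) θ).hasDerivAt.const_smul ε)).deriv
  simp only [hspeed]
  exact hasDerivAt_average_mul_norm_add_smul hg hc.continuous hh.continuous
    (hc.continuous_deriv (by simp)) (hh.continuous_deriv (by simp)) two_pi_pos fun θ _ => himm θ

/-- First variation of the average `⟨g(c)⟩ = (1/L)∫ g(c(s)) ds` of a C¹
function `g : ℝⁿ → ℝ` along a smooth closed immersed curve `c` (modeled as a
2π-periodic map), in the direction of a smooth deformation `h`:
`d/dε|₀ ⟨g(c+εh)⟩ = (1/L)∫ [∇g(c)·h + (g(c) − ⟨g(c)⟩)⟨D_s h, T⟩] ds`. -/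
theorem first_variation_of_average
    (n : ℕ) (g : EuclideanSpace ℝ (Fin n) → ℝ) (hg : ContDiff ℝ 1 g)
    (c h : ℝ → EuclideanSpace ℝ (Fin n))
    (hc : ContDiff ℝ (⊤ : ℕ∞) c) (hh : ContDiff ℝ (⊤ : ℕ∞) h)
    (hcper : ∀ θ, c (θ + 2 * π) = c θ) (hhper : ∀ θ, h (θ + 2 * π) = h θ)
    (himm : ∀ θ, deriv c θ ≠ 0) :
    HasDerivAt
      (fun ε : ℝ =>
        (∫ θ in (0:ℝ)..(2 * π), ‖deriv (fun θ' => c θ' + ε • h θ') θ‖)⁻¹ *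
          ∫ θ in (0:ℝ)..(2 * π),
            g (c θ + ε • h θ) * ‖deriv (fun θ' => c θ' + ε • h θ') θ‖)
      ((∫ θ in (0:ℝ)..(2 * π), ‖deriv c θ‖)⁻¹ *
        ∫ θ in (0:ℝ)..(2 * π),
          (fderiv ℝ g (c θ) (h θ) +
            (g (c θ) -
              (∫ θ' in (0:ℝ)..(2 * π), ‖deriv c θ'‖)⁻¹ *
                ∫ θ' in (0:ℝ)..(2 * π), g (c θ') * ‖deriv c θ'‖) *
              ⟪‖deriv c θ‖⁻¹ • deriv h θ, ‖deriv c θ‖⁻¹ • deriv c θ⟫) *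
            ‖deriv c θ‖) 0 :=
  first_variation_of_average_general n g hg c h hc hh himm
end

section
/- Suppose 0 < L₀/2 < L(t) < 3L₀/2 for all t ∈ [0,1], N(t) ≤ a₂ d for all t, and |E'(t)| ≤ 2N(t) + 2E(t)N(t) + 3E(t)√(L(t))N(t) with E ≥ 0 continuous, differentiable. Then E(1) ≤ (E(0) + 2a₂ d) · exp((2 + 3a₄) a₂ d), where a₄ = √(3L₀/2). -/
/-!
With `M = a₂ d`, the assumptions give `E' ≤ K E + ε` on `[0, 1]` for `K = (2 + 3a₄) M` and
`ε = 2M`, because `0 ≤ N ≤ M`, `E ≥ 0` and `√L ≤ a₄`. Grönwall's inequality then yields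
`E 1 ≤ E 0 · e^K + (ε / K)(e^K - 1)`, and `e^K - 1 ≤ K e^K` turns this into the stated bound.
-/

open Real Set

theorem Real.exp_sub_one_le_mul_exp (x : ℝ) : exp x - 1 ≤ x * exp x := by
  have h := mul_le_mul_of_nonneg_right (one_sub_le_exp_neg x) (exp_pos x).le
  rw [← exp_add, neg_add_cancel, exp_zero] at h
  linarith

theorem gronwallBound_le_add_mul_mul_exp {δ K ε : ℝ} (hK : 0 ≤ K) (hε : 0 ≤ ε) (x : ℝ) :
    gronwallBound δ K ε x ≤ (δ + ε * x) * exp (K * x) := by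
  rcases hK.eq_or_lt with rfl | hK
  · simp [gronwallBound_K0]
  · rw [gronwallBound_of_K_ne_0 hK.ne']
    calc δ * exp (K * x) + ε / K * (exp (K * x) - 1)
        ≤ δ * exp (K * x) + ε / K * (K * x * exp (K * x)) := by
          gcongr; exact exp_sub_one_le_mul_exp _
      _ = (δ + ε * x) * exp (K * x) := by field_simp

theorem le_gronwallBound_of_hasDerivAt_le {f f' : ℝ → ℝ} {δ K ε a b : ℝ}
    (hf : ∀ x ∈ Icc a b, HasDerivAt f (f' x) x) (ha : f a ≤ δ)
    (bound : ∀ x ∈ Ico a b, f' x ≤ K * f x + ε) :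
    ∀ x ∈ Icc a b, f x ≤ gronwallBound δ K ε (x - a) :=
  le_gronwallBound_of_liminf_deriv_right_le
    (fun x hx => (hf x hx).continuousAt.continuousWithinAt)
    (fun x hx _ hr =>
      ((hf x (Ico_subset_Icc_self hx)).hasDerivWithinAt (s := Ici x)).liminf_right_slope_le hr)
    ha bound

theorem elastic_rate_le {e n s a M : ℝ} (he : 0 ≤ e) (hn : 0 ≤ n) (hnM : n ≤ M) (hs₀ : 0 ≤ s)
    (hs : s ≤ a) :
    2 * n + 2 * e * n + 3 * e * s * n ≤ (2 + 3 * a) * M * e + 2 * M := by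
  have ha : 0 ≤ (2 + 3 * a) * e := mul_nonneg (by linarith) he
  nlinarith [mul_nonneg ha (sub_nonneg.2 hnM), mul_nonneg (mul_nonneg (sub_nonneg.2 hs) he) hn]

theorem gronwall_elastic_energy_general
    (L N E E' : ℝ → ℝ) (L₀ a₂ d : ℝ)
    (hE : ∀ t ∈ Set.Icc (0:ℝ) 1, HasDerivAt E (E' t) t)
    (hEnn : ∀ t ∈ Set.Icc (0:ℝ) 1, 0 ≤ E t)
    (hNnn : ∀ t ∈ Set.Icc (0:ℝ) 1, 0 ≤ N t)
    (hLb : ∀ t ∈ Set.Icc (0:ℝ) 1, L₀ / 2 < L t ∧ L t < 3 * L₀ / 2)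
    (hN : ∀ t ∈ Set.Icc (0:ℝ) 1, N t ≤ a₂ * d)
    (hE' : ∀ t ∈ Set.Icc (0:ℝ) 1,
      |E' t| ≤ 2 * N t + 2 * E t * N t + 3 * E t * Real.sqrt (L t) * N t) :
    E 1 ≤ (E 0 + 2 * a₂ * d) *
      Real.exp ((2 + 3 * Real.sqrt (3 * L₀ / 2)) * a₂ * d) := by
  have h0 : (0 : ℝ) ∈ Icc (0 : ℝ) 1 := ⟨le_rfl, zero_le_one⟩
  have hM : 0 ≤ a₂ * d := (hNnn 0 h0).trans (hN 0 h0)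
  have hK : 0 ≤ (2 + 3 * √(3 * L₀ / 2)) * (a₂ * d) := by positivity
  have hrate : ∀ t ∈ Ico (0 : ℝ) 1,
      E' t ≤ (2 + 3 * √(3 * L₀ / 2)) * (a₂ * d) * E t + 2 * (a₂ * d) := fun t ht =>
    have ht' := Ico_subset_Icc_self ht
    (le_abs_self _).trans <| (hE' t ht').trans <| elastic_rate_le (hEnn t ht') (hNnn t ht')
      (hN t ht') (sqrt_nonneg _) (sqrt_le_sqrt (hLb t ht').2.le)
  calc E 1 ≤ _ := le_gronwallBound_of_hasDerivAt_le hE le_rfl hrate 1 ⟨zero_le_one, le_rfl⟩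
    _ ≤ _ := gronwallBound_le_add_mul_mul_exp hK (by positivity) _
    _ = _ := by ring_nf

/-- The Gronwall-type estimate from the proof that the elastic energy is locally
Lipschitz for the `H²` distance: if `L₀/2 < L(t) < 3L₀/2`, `N(t) ≤ a₂ d`, and
`|E'(t)| ≤ 2N(t) + 2E(t)N(t) + 3E(t)√(L(t))N(t)` on `[0,1]`, then
`E(1) ≤ (E(0) + 2a₂d) exp((2 + 3a₄) a₂ d)` with `a₄ = √(3L₀/2)`. -/
theorem gronwall_elastic_energy
    (L N E E' : ℝ → ℝ) (L₀ a₂ d : ℝ)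
    (hL₀ : 0 < L₀) (ha₂ : 0 < a₂) (hd : 0 ≤ d)
    (hE : ∀ t ∈ Set.Icc (0:ℝ) 1, HasDerivAt E (E' t) t)
    (hEnn : ∀ t ∈ Set.Icc (0:ℝ) 1, 0 ≤ E t)
    (hNnn : ∀ t ∈ Set.Icc (0:ℝ) 1, 0 ≤ N t)
    (hLb : ∀ t ∈ Set.Icc (0:ℝ) 1, L₀ / 2 < L t ∧ L t < 3 * L₀ / 2)
    (hN : ∀ t ∈ Set.Icc (0:ℝ) 1, N t ≤ a₂ * d)
    (hE' : ∀ t ∈ Set.Icc (0:ℝ) 1,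
      |E' t| ≤ 2 * N t + 2 * E t * N t + 3 * E t * Real.sqrt (L t) * N t) :
    E 1 ≤ (E 0 + 2 * a₂ * d) *
      Real.exp ((2 + 3 * Real.sqrt (3 * L₀ / 2)) * a₂ * d) :=
  gronwall_elastic_energy_general L N E E' L₀ a₂ d hE hEnn hNnn hLb hN hE'
end
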